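/- arXiv:1802.01037 — 5 statements merged into one kernel-verified Lean document; each statement's English description precedes it below -/
import Mathlib

section
/- Let n ≥ 2 and let I₁, …, I_{n−1} : ℝⁿ → ℝ be twice continuously differentiable functions. Define the vector field l : ℝⁿ → ℝⁿ whose i-th component is l_i(x) = (−1)^{i+1} det M_i(x), where M_i(x) is the (n−1)×(n−1) matrix obtained from the Jacobian matrix (∂I_k/∂x_j)_{1≤k≤n−1, 1≤j≤n} by deleting its i-th column. Then div l = Σᵢ ∂l_i/∂x_i = 0 at every point of ℝⁿ. -/
/-!
By Jacobi's formula, `∂ᵢ lᵢ = (-1)^i ∑ₖ det Mᵢₖ`, where `Mᵢₖ` is `Mᵢ` with its `k`-th row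
replaced by `(∂ᵢ∂_b Iₖ)_{b ≠ i}`. Put `eᵢ` on top of the Jacobian with its `k`-th row replaced by
`(∂ᵢ∂_b Iₖ)_b`: expanding along `eᵢ`, this square matrix has determinant `(-1)^i det Mᵢₖ`.
Expanding also its `k`-th row in the standard basis, the contribution of `Iₖ` to the divergence
becomes `∑_{a,b} ∂ₐ∂_b Iₖ · c(a,b)`, where `c(a,b)` is the determinant with `e_a` on top and `e_b`
in place of row `k`. As `c` is alternating and the Hessian symmetric, the sum vanishes.
-/

theorem Fintype.sum_sum_mul_eq_zero_of_symm_of_alternating {ι R : Type*} [Fintype ι]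
    [CommRing R] {g c : ι → ι → R} (hg : ∀ a b, g a b = g b a) (hc : ∀ a b, c a b = -c b a)
    (hc_diag : ∀ a, c a a = 0) :
    ∑ a, ∑ b, g a b * c a b = 0 := by
  rw [← Fintype.sum_prod_type']
  refine Finset.sum_ninvolution Prod.swap (fun ⟨a, b⟩ => ?_) (fun ⟨a, b⟩ hab h => ?_)
    (fun _ => Finset.mem_univ _) Prod.swap_swap
  · simp only [Prod.swap_prod_mk, hg b a, hc b a]
    ring
  · obtain rfl : a = b := (Prod.ext_iff.mp h).1.symm
    simp [hc_diag] at hab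

namespace Matrix

variable {R : Type*} [CommRing R]

section Fintype

variable {ι : Type*} [Fintype ι] [DecidableEq ι]

theorem det_updateRow_eq_sum_mul_det_updateRow_single (M : Matrix ι ι R) (q : ι) (v : ι → R) :
    (M.updateRow q v).det = ∑ b, v b * (M.updateRow q (Pi.single b 1)).det := by
  rw [det_eq_sum_mul_adjugate_row _ q]
  refine Finset.sum_congr rfl fun b _ => ?_
  rw [updateRow_self, adjugate_apply, updateRow_idem]

theorem sum_det_updateRow_single_updateRow_eq_zero (B : Matrix ι ι R) {p q : ι} (hpq : p ≠ q)
    (g : ι → ι → R) (hg : ∀ a b, g a b = g b a) :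
    ∑ a, ((B.updateRow p (Pi.single a 1)).updateRow q (g a)).det = 0 := by
  set c : ι → ι → R := fun a b =>
    ((B.updateRow p (Pi.single a 1)).updateRow q (Pi.single b 1)).det
  have hc : ∀ a b, c a b = -c b a := fun a b => by
    have hswap : ((B.updateRow p (Pi.single b 1)).updateRow q (Pi.single a 1)).submatrix
        (Equiv.swap p q) id = (B.updateRow p (Pi.single a 1)).updateRow q (Pi.single b 1) := by
      ext r j
      rcases eq_or_ne r p with rfl | hrp
      · simp [hpq]
      rcases eq_or_ne r q with rfl | hrq
      · simp [updateRow_apply, hpq]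
      · simp [updateRow_apply, Equiv.swap_apply_of_ne_of_ne hrp hrq, hrp, hrq]
    simp only [c, ← hswap, det_permute, Equiv.Perm.sign_swap hpq]
    simp
  have hc_diag : ∀ a, c a a = 0 := fun a => det_zero_of_row_eq hpq (by simp [hpq])
  calc ∑ a, ((B.updateRow p (Pi.single a 1)).updateRow q (g a)).det
      = ∑ a, ∑ b, g a b * c a b := Finset.sum_congr rfl fun a _ =>
        det_updateRow_eq_sum_mul_det_updateRow_single _ q (g a)
    _ = 0 := Fintype.sum_sum_mul_eq_zero_of_symm_of_alternating hg hc hc_diag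

end Fintype

theorem det_updateRow_zero_single {n : ℕ} (B : Matrix (Fin (n + 1)) (Fin (n + 1)) R)
    (a : Fin (n + 1)) :
    (B.updateRow 0 (Pi.single a 1)).det =
      (-1) ^ (a : ℕ) * (B.submatrix Fin.succ a.succAbove).det := by
  rw [det_succ_row_zero, Finset.sum_eq_single a]
  · rw [← Fin.succAbove_zero, submatrix_updateRow_succAbove]
    simp
  · intro b _ hba
    simp [updateRow_self, hba]
  · simp

theorem sum_neg_one_pow_mul_det_updateRow_submatrix_succAbove_eq_zero {n : ℕ}
    (J : Matrix (Fin n) (Fin (n + 1)) R) (k : Fin n) (g : Fin (n + 1) → Fin (n + 1) → R)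
    (hg : ∀ a b, g a b = g b a) :
    ∑ i : Fin (n + 1), (-1) ^ (i : ℕ) * ((J.updateRow k (g i)).submatrix id i.succAbove).det =
      0 := by
  set B : Matrix (Fin (n + 1)) (Fin (n + 1)) R := of (vecCons 0 (of.symm J))
  have hB : ∀ i : Fin (n + 1),
      (-1) ^ (i : ℕ) * ((J.updateRow k (g i)).submatrix id i.succAbove).det =
        ((B.updateRow 0 (Pi.single i 1)).updateRow k.succ (g i)).det := fun i => by
    rw [updateRow_comm _ (Fin.succ_ne_zero k).symm, det_updateRow_zero_single]
    congr 2
    ext r j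
    simp [B, updateRow_apply]
  simp only [hB]
  exact sum_det_updateRow_single_updateRow_eq_zero B (Fin.succ_ne_zero k).symm g hg

end Matrix

section Calculus

variable {𝕜 : Type*} [NontriviallyNormedField 𝕜] {ι : Type*} [Fintype ι]
  {E : Type*} [NormedAddCommGroup E] [NormedSpace 𝕜 E]

variable (𝕜 ι) in
def Matrix.detRowContinuousMultilinear [DecidableEq ι] :
    ContinuousMultilinearMap 𝕜 (fun _ : ι => ι → 𝕜) 𝕜 :=
  ⟨Matrix.detRowAlternating.toMultilinearMap, continuous_id.matrix_det⟩

theorem HasFDerivAt.matrix_det [DecidableEq ι] {A : E → ι → ι → 𝕜} {A' : E →L[𝕜] ι → ι → 𝕜}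
    {x : E} (hA : HasFDerivAt A A' x) :
    HasFDerivAt (fun y => (Matrix.of (A y)).det)
      ((Matrix.detRowContinuousMultilinear 𝕜 ι).linearDeriv (A x) ∘L A') x :=
  ((Matrix.detRowContinuousMultilinear 𝕜 ι).hasFDerivAt (A x)).comp x hA

theorem HasFDerivAt.fderiv_matrix_det_apply [DecidableEq ι] {A : E → ι → ι → 𝕜}
    {A' : E →L[𝕜] ι → ι → 𝕜} {x : E} (hA : HasFDerivAt A A' x) (v : E) :
    fderiv 𝕜 (fun y => (Matrix.of (A y)).det) x v =
      ∑ k, ((Matrix.of (A x)).updateRow k (A' v k)).det := by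
  rw [hA.matrix_det.fderiv, ContinuousLinearMap.comp_apply,
    ContinuousMultilinearMap.linearDeriv_apply]
  rfl

theorem hasFDerivAt_fderiv_apply_pi {κ : Type*} [Fintype κ] {f : κ → E → 𝕜} {x : E}
    (hf : ∀ k, DifferentiableAt 𝕜 (fderiv 𝕜 (f k)) x) (w : ι → E) :
    HasFDerivAt (fun y k j => fderiv 𝕜 (f k) y (w j))
      (ContinuousLinearMap.pi fun k => ContinuousLinearMap.pi fun j =>
        ContinuousLinearMap.apply 𝕜 𝕜 (w j) ∘L fderiv 𝕜 (fderiv 𝕜 (f k)) x) x :=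
  hasFDerivAt_pi.2 fun k => hasFDerivAt_pi.2 fun j =>
    (ContinuousLinearMap.apply 𝕜 𝕜 (w j)).hasFDerivAt.comp x (hf k).hasFDerivAt

end Calculus

theorem nambu_flow_divergence_free_general (n : ℕ)
    (I : Fin n → (Fin (n + 1) → ℝ) → ℝ) (hI : ∀ k, ContDiff ℝ 2 (I k))
    (l : (Fin (n + 1) → ℝ) → (Fin (n + 1) → ℝ))
    (hl : ∀ x i, l x i = (-1 : ℝ) ^ (i : ℕ) *
      Matrix.det (Matrix.of fun (k : Fin n) (j : Fin n) =>
        fderiv ℝ (I k) x (Pi.single (i.succAbove j) 1))) :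
    ∀ x : Fin (n + 1) → ℝ,
      ∑ i : Fin (n + 1), fderiv ℝ (fun y => l y i) x (Pi.single i 1) = 0 := by
  intro x
  set J : Matrix (Fin n) (Fin (n + 1)) ℝ := .of fun k c => fderiv ℝ (I k) x (Pi.single c 1)
  set H : Fin n → Fin (n + 1) → Fin (n + 1) → ℝ := fun k a b =>
    fderiv ℝ (fderiv ℝ (I k)) x (Pi.single a 1) (Pi.single b 1)
  have hH : ∀ k a b, H k a b = H k b a := fun k a b =>
    (hI k).contDiffAt.isSymmSndFDerivAt (by simp [minSmoothness_of_isRCLikeNormedField]) _ _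
  have hI' : ∀ k, DifferentiableAt ℝ (fderiv ℝ (I k)) x := fun k =>
    ((hI k).fderiv_right (m := 1) le_rfl).differentiable one_ne_zero x
  have hdiag : ∀ i, fderiv ℝ (fun y => l y i) x (Pi.single i 1) =
      (-1) ^ (i : ℕ) * ∑ k, ((J.updateRow k (H k i)).submatrix id i.succAbove).det := by
    intro i
    have hminor := hasFDerivAt_fderiv_apply_pi hI' fun j => Pi.single (i.succAbove j) (1 : ℝ)
    rw [funext (hl · i), fderiv_const_mul hminor.matrix_det.differentiableAt, smul_apply,
      smul_eq_mul, hminor.fderiv_matrix_det_apply]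
    congr 1
    refine Finset.sum_congr rfl fun k _ => ?_
    congr 1
    ext r j
    simp [J, H, Matrix.updateRow_apply]
  calc ∑ i, fderiv ℝ (fun y => l y i) x (Pi.single i 1)
      = ∑ k, ∑ i : Fin (n + 1),
          (-1) ^ (i : ℕ) * ((J.updateRow k (H k i)).submatrix id i.succAbove).det := by
        simp only [hdiag, Finset.mul_sum]
        exact Finset.sum_comm
    _ = 0 := Finset.sum_eq_zero fun k _ =>
        Matrix.sum_neg_one_pow_mul_det_updateRow_submatrix_succAbove_eq_zero J k (H k) (hH k)

/-- Theorem 1 of the paper: the Nambu phase flow determined by `n - 1` Hamiltonians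
`I₁, …, I_{n-1} : ℝⁿ → ℝ` is divergence-free.  Here the dimension is `n + 1` (with
`1 ≤ n`, i.e. dimension at least `2`), and there are `n` twice continuously
differentiable functions `I k : ℝ^{n+1} → ℝ`.  The vector field `l` has `i`-th
component `(-1)^i · det Mᵢ`, where `Mᵢ` is obtained from the Jacobian matrix
`(∂I k/∂x j)` by deleting the `i`-th column (signs written for 0-based indices,
matching `(-1)^{i+1}` for 1-based indices). -/
theorem nambu_flow_divergence_free (n : ℕ) (hn : 1 ≤ n)
    (I : Fin n → (Fin (n + 1) → ℝ) → ℝ) (hI : ∀ k, ContDiff ℝ 2 (I k))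
    (l : (Fin (n + 1) → ℝ) → (Fin (n + 1) → ℝ))
    (hl : ∀ x i, l x i = (-1 : ℝ) ^ (i : ℕ) *
      Matrix.det (Matrix.of fun (k : Fin n) (j : Fin n) =>
        fderiv ℝ (I k) x (Pi.single (i.succAbove j) 1))) :
    ∀ x : Fin (n + 1) → ℝ,
      ∑ i : Fin (n + 1), fderiv ℝ (fun y => l y i) x (Pi.single i 1) = 0 :=
  nambu_flow_divergence_free_general n I hI l hl
end

section
/- Define the vector field h : ℝ³ → ℝ³ by h(x,y,z) = ¼ (x²z − y³, xy² − z³, yz² − x³). Then curl h = (z², x², y²) at every point of ℝ³, i.e., h is a vector Hamiltonian for the system ẋ = z², ẏ = x², ż = y². -/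
/-- The curl of a vector field on ℝ³ (0-based coordinates):
`curl v = (∂₁v₂ - ∂₂v₁, ∂₂v₀ - ∂₀v₂, ∂₀v₁ - ∂₁v₀)`. -/
noncomputable def curl3 (v : (Fin 3 → ℝ) → (Fin 3 → ℝ)) (x : Fin 3 → ℝ) : Fin 3 → ℝ :=
  let pd : Fin 3 → Fin 3 → ℝ := fun i j => fderiv ℝ (fun y => v y j) x (Pi.single i 1)
  ![pd 1 2 - pd 2 1, pd 2 0 - pd 0 2, pd 0 1 - pd 1 0]

/-!
Each component of `h` has the cyclic form `hⱼ = ¼ (qⱼ² qⱼ₊₂ - qⱼ₊₁³)` (indices mod 3), a polynomial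
whose gradient is explicit. Reading the partial derivatives off these gradients, each component of
`curl h` collects one term `¼ q²` from a square and one term `¾ q²` from a cube.
-/

open ContinuousLinearMap

theorem curl3_eq_of_hasFDerivAt {v : (Fin 3 → ℝ) → Fin 3 → ℝ} {x : Fin 3 → ℝ}
    {L : Fin 3 → (Fin 3 → ℝ) →L[ℝ] ℝ} (hL : ∀ j, HasFDerivAt (fun y => v y j) (L j) x) :
    curl3 v x =
      ![L 2 (Pi.single 1 1) - L 1 (Pi.single 2 1),
        L 0 (Pi.single 2 1) - L 2 (Pi.single 0 1),
        L 1 (Pi.single 0 1) - L 0 (Pi.single 1 1)] := by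
  simp only [curl3, fun j => (hL j).fderiv]

theorem hasFDerivAt_sq_mul_sub_cube {ι : Type*} [Fintype ι] (a b c : ι) (x : ι → ℝ) :
    HasFDerivAt (fun q : ι → ℝ => q a ^ 2 * q b - q c ^ 3)
      ((2 * x a * x b) • proj (R := ℝ) (φ := fun _ : ι => ℝ) a + x a ^ 2 • proj b
        - (3 * x c ^ 2) • proj c) x := by
  have hq : ∀ i, HasFDerivAt (fun q : ι → ℝ => q i) (proj i : (ι → ℝ) →L[ℝ] ℝ) x :=
    fun i => hasFDerivAt_apply i x
  refine ((((hq a).pow 2).mul (hq b)).sub ((hq c).pow 3)).congr_fderiv ?_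
  ext v
  simp
  ring

noncomputable def vectorHamiltonian (q : Fin 3 → ℝ) : Fin 3 → ℝ :=
  (1 / 4 : ℝ) •
    ![(q 0) ^ 2 * q 2 - (q 1) ^ 3,
      q 0 * (q 1) ^ 2 - (q 2) ^ 3,
      q 1 * (q 2) ^ 2 - (q 0) ^ 3]

theorem vectorHamiltonian_apply (q : Fin 3 → ℝ) (j : Fin 3) :
    vectorHamiltonian q j = (1 / 4 : ℝ) * (q j ^ 2 * q (j + 2) - q (j + 1) ^ 3) := by
  fin_cases j <;> simp [vectorHamiltonian] <;> ring

theorem hasFDerivAt_vectorHamiltonian_apply (x : Fin 3 → ℝ) (j : Fin 3) :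
    HasFDerivAt (fun q => vectorHamiltonian q j)
      ((1 / 4 : ℝ) • ((2 * x j * x (j + 2)) • proj (R := ℝ) (φ := fun _ : Fin 3 => ℝ) j
        + x j ^ 2 • proj (j + 2) - (3 * x (j + 1) ^ 2) • proj (j + 1))) x := by
  simp only [vectorHamiltonian_apply]
  exact (hasFDerivAt_sq_mul_sub_cube j (j + 2) (j + 1) x).const_mul _

/-- The vector field `h(x,y,z) = ¼ (x²z - y³, xy² - z³, yz² - x³)` is a vector
Hamiltonian of the non-integrable system `ẋ = z², ẏ = x², ż = y²`:
`curl h = (z², x², y²)` at every point of ℝ³. -/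
theorem curl_vectorHamiltonian_nonintegrable :
    ∀ p : Fin 3 → ℝ,
      curl3 (fun q => (1 / 4 : ℝ) •
          ![(q 0) ^ 2 * q 2 - (q 1) ^ 3,
            q 0 * (q 1) ^ 2 - (q 2) ^ 3,
            q 1 * (q 2) ^ 2 - (q 0) ^ 3]) p
        = ![(p 2) ^ 2, (p 0) ^ 2, (p 1) ^ 2] := by
  intro p
  change curl3 vectorHamiltonian p = _
  rw [curl3_eq_of_hasFDerivAt (hasFDerivAt_vectorHamiltonian_apply p)]
  ext j
  fin_cases j <;> simp <;> ring
end

section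
/- Fix a point (x,y,z) ∈ ℝ³ with z ≠ 0. In the exterior algebra of the dual of ℝ³ with dual basis dx, dy, dz, the following identity of 2-covectors holds: z² dy∧dz + x² dz∧dx + y² dx∧dy = (z² dy − x² dx) ∧ (dz − (y²/z²) dx). -/
open ExteriorAlgebra

/-- The paper's decomposition `dh = J₁ ∧ J₂` for the non-integrable system
`ẋ = z², ẏ = x², ż = y²`: at any point with `z ≠ 0`, the 2-covector
`z² dy∧dz + x² dz∧dx + y² dx∧dy` equals `(z² dy - x² dx) ∧ (dz - (y²/z²) dx)`.
The dual of ℝ³ is modelled by `Fin 3 → ℝ` with dual basis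
`dx = Pi.single 0 1`, `dy = Pi.single 1 1`, `dz = Pi.single 2 1`. -/
theorem nonintegrable_form_splits (x y z : ℝ) (hz : z ≠ 0) :
    (z ^ 2) • (ι ℝ (Pi.single 1 1 : Fin 3 → ℝ) * ι ℝ (Pi.single 2 1 : Fin 3 → ℝ))
      + (x ^ 2) • (ι ℝ (Pi.single 2 1 : Fin 3 → ℝ) * ι ℝ (Pi.single 0 1 : Fin 3 → ℝ))
      + (y ^ 2) • (ι ℝ (Pi.single 0 1 : Fin 3 → ℝ) * ι ℝ (Pi.single 1 1 : Fin 3 → ℝ))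
    = ((z ^ 2) • ι ℝ (Pi.single 1 1 : Fin 3 → ℝ)
        - (x ^ 2) • ι ℝ (Pi.single 0 1 : Fin 3 → ℝ))
      * (ι ℝ (Pi.single 2 1 : Fin 3 → ℝ)
          - (y ^ 2 / z ^ 2) • ι ℝ (Pi.single 0 1 : Fin 3 → ℝ)) := by
  set a := ι ℝ (Pi.single 0 1 : Fin 3 → ℝ) with ha'
  set b := ι ℝ (Pi.single 1 1 : Fin 3 → ℝ) with hb'
  set c := ι ℝ (Pi.single 2 1 : Fin 3 → ℝ) with hc'
  have haa : a * a = 0 := ι_sq_zero _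
  have hba : b * a = -(a * b) := eq_neg_of_add_eq_zero_left (by rw [ha', hb']; exact ι_add_mul_swap _ _)
  have hca : c * a = -(a * c) := eq_neg_of_add_eq_zero_left (by rw [ha', hc']; exact ι_add_mul_swap _ _)
  have key : y ^ 2 / z ^ 2 * z ^ 2 = y ^ 2 := by field_simp
  simp only [sub_mul, mul_sub, smul_mul_assoc, mul_smul_comm, smul_smul, haa, smul_zero,
    smul_neg, sub_zero, key, hba, hca, sub_neg_eq_add, neg_neg]
  abel
end

section
/- On the open subset of ℝ⁴ (coordinates (x₁,p₁,x₂,p₂)) where all four coordinates are nonzero, the 1-form J₃ = ½ (dx₁/p₁ − dp₁/x₁ − dx₂/p₂ + dp₂/x₂) is not closed; in fact its exterior derivative dJ₃ = ½ ((1/x₁² + 1/p₁²) dx₁∧dp₁ − (1/x₂² + 1/p₂²) dx₂∧dp₂) is nonzero at every point of this set. -/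
/-- The 1-form `J₃ = ½ (dx₁/p₁ - dp₁/x₁ - dx₂/p₂ + dp₂/x₂)` on ℝ⁴, with
coordinates `(x₁, p₁, x₂, p₂)` numbered `(0, 1, 2, 3)`, evaluated at the point
`y` on the tangent vector `u`. -/
noncomputable def J₃ (y u : Fin 4 → ℝ) : ℝ :=
  (1 / 2 : ℝ) * (u 0 / y 1 - u 1 / y 0 - u 2 / y 3 + u 3 / y 2)

/-- The exterior derivative of the 1-form `J₃` at `z`, evaluated on the pair of
(constant) tangent vectors `(u, w)`: `dω(u, w) = D_u(ω(w)) - D_w(ω(u))`. -/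
noncomputable def dJ₃ (z u w : Fin 4 → ℝ) : ℝ :=
  fderiv ℝ (fun y => J₃ y w) z u - fderiv ℝ (fun y => J₃ y u) z w

lemma inv_deriv (z : Fin 4 → ℝ) (i : Fin 4) (hi : z i ≠ 0) :
    HasFDerivAt (fun y : Fin 4 → ℝ => (y i)⁻¹)
      (-(z i ^ 2)⁻¹ • (ContinuousLinearMap.proj i : (Fin 4 → ℝ) →L[ℝ] ℝ)) z :=
  (hasDerivAt_inv hi).comp_hasFDerivAt z (hasFDerivAt_apply i z)

lemma J3_deriv (z w : Fin 4 → ℝ) (hz : ∀ i, z i ≠ 0) (u : Fin 4 → ℝ) :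
    fderiv ℝ (fun y => J₃ y w) z u =
      (1/2 : ℝ) * (w 0 * (-(z 1 ^ 2)⁻¹ * u 1) - w 1 * (-(z 0 ^ 2)⁻¹ * u 0)
        - w 2 * (-(z 3 ^ 2)⁻¹ * u 3) + w 3 * (-(z 2 ^ 2)⁻¹ * u 2)) := by
  have h : HasFDerivAt (fun y => J₃ y w)
      ((1/2 : ℝ) • (w 0 • (-(z 1 ^ 2)⁻¹ • (ContinuousLinearMap.proj 1 : (Fin 4 → ℝ) →L[ℝ] ℝ))
        - w 1 • (-(z 0 ^ 2)⁻¹ • (ContinuousLinearMap.proj 0 : (Fin 4 → ℝ) →L[ℝ] ℝ))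
        - w 2 • (-(z 3 ^ 2)⁻¹ • (ContinuousLinearMap.proj 3 : (Fin 4 → ℝ) →L[ℝ] ℝ))
        + w 3 • (-(z 2 ^ 2)⁻¹ • (ContinuousLinearMap.proj 2 : (Fin 4 → ℝ) →L[ℝ] ℝ)))) z := by
    have h1 := inv_deriv z 1 (hz 1)
    have h0 := inv_deriv z 0 (hz 0)
    have h3 := inv_deriv z 3 (hz 3)
    have h2 := inv_deriv z 2 (hz 2)
    have H := ((((h1.const_smul (w 0)).sub (h0.const_smul (w 1))).sub
      (h3.const_smul (w 2))).add (h2.const_smul (w 3))).const_smul (1/2 : ℝ)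
    have hfun : (fun y : Fin 4 → ℝ => J₃ y w) =
        (fun y : Fin 4 → ℝ => (1/2 : ℝ) • (w 0 • (y 1)⁻¹ - w 1 • (y 0)⁻¹
          - w 2 • (y 3)⁻¹ + w 3 • (y 2)⁻¹)) := by
      funext y
      simp only [J₃, smul_eq_mul, div_eq_mul_inv]
    rw [hfun]
    exact H
  rw [h.fderiv]
  simp only [ContinuousLinearMap.smul_apply, ContinuousLinearMap.add_apply,
    ContinuousLinearMap.sub_apply, ContinuousLinearMap.proj_apply, smul_eq_mul]

/-- On the set where all four coordinates `(x₁, p₁, x₂, p₂)` are nonzero, the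
exterior derivative of `J₃` is given by
`dJ₃ = ½ ((1/x₁² + 1/p₁²) dx₁∧dp₁ - (1/x₂² + 1/p₂²) dx₂∧dp₂)` and is nonzero at
every point of this set; in particular `J₃` is not closed. -/
theorem dJ₃_formula_and_ne_zero (z : Fin 4 → ℝ) (hz : ∀ i, z i ≠ 0) :
    (∀ u w : Fin 4 → ℝ,
      dJ₃ z u w = (1 / 2 : ℝ) *
        ((1 / (z 0) ^ 2 + 1 / (z 1) ^ 2) * (u 0 * w 1 - u 1 * w 0)
          - (1 / (z 2) ^ 2 + 1 / (z 3) ^ 2) * (u 2 * w 3 - u 3 * w 2)))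
    ∧ ∃ u w : Fin 4 → ℝ, dJ₃ z u w ≠ 0 := by
  have key : ∀ u w : Fin 4 → ℝ,
      dJ₃ z u w = (1 / 2 : ℝ) *
        ((1 / (z 0) ^ 2 + 1 / (z 1) ^ 2) * (u 0 * w 1 - u 1 * w 0)
          - (1 / (z 2) ^ 2 + 1 / (z 3) ^ 2) * (u 2 * w 3 - u 3 * w 2)) := by
    intro u w
    rw [dJ₃, J3_deriv z w hz u, J3_deriv z u hz w]
    field_simp
    ring
  refine ⟨key, Pi.single 0 1, Pi.single 1 1, ?_⟩
  rw [key]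
  simp only [Pi.single_eq_same, Pi.single_eq_of_ne (by decide : (0:Fin 4) ≠ 1),
    Pi.single_eq_of_ne (by decide : (1:Fin 4) ≠ 0),
    Pi.single_eq_of_ne (by decide : (2:Fin 4) ≠ 1),
    Pi.single_eq_of_ne (by decide : (3:Fin 4) ≠ 1),
    Pi.single_eq_of_ne (by decide : (2:Fin 4) ≠ 0),
    Pi.single_eq_of_ne (by decide : (3:Fin 4) ≠ 0)]
  have hz0 := hz 0
  have hz1 := hz 1
  ring_nf
  intro hcon
  have h0 : (z 0)⁻¹ ^ 2 > 0 := by positivity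
  have h1 : (z 1)⁻¹ ^ 2 > 0 := by positivity
  nlinarith
end

section
/- Let (x₁,p₁,x₂,p₂) be a point of ℝ⁴ with all coordinates nonzero, and let v = (p₁, −x₁, p₂, −x₂) be the harmonic oscillator vector at that point. Let dI₁ = x₁dx₁ + p₁dp₁, dI₂ = x₂dx₂ + p₂dp₂, and J₃ = ½(dx₁/p₁ − dp₁/x₁ − dx₂/p₂ + dp₂/x₂), regarded as covectors on ℝ⁴. Then the following identity of alternating 3-forms holds: dI₁ ∧ dI₂ ∧ J₃ = v ⌟ (dx₁∧dp₁∧dx₂∧dp₂), i.e., for all u, w, s ∈ ℝ⁴, (dI₁∧dI₂∧J₃)(u,w,s) = (dx₁∧dp₁∧dx₂∧dp₂)(v,u,w,s). -/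
/-!
If `A` is the matrix whose rows are the coefficients of three covectors on `ℝ⁴`, then
`(α ∧ β ∧ γ)(u, w, s) = det (A Bᵀ)` with `B` the matrix of rows `u, w, s`. By Cauchy–Binet this is
`∑ⱼ det Aⱼ det Bⱼ` over the maximal minors (column `j` deleted), which is the Laplace expansion
along the first row of `det (v, u, w, s)` for `v` the generalized cross product `vⱼ = (-1)ʲ det Aⱼ`.
So `α ∧ β ∧ γ = v ⌟ Ω`, and it remains to check that the cross product of `dI₁, dI₂, J₃` is the
oscillator vector `(p₁, -x₁, p₂, -x₂)`.
-/

open Matrix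

section GeneralizedCrossProduct

variable {R : Type*} [CommRing R] {n : ℕ}

def generalizedCrossProduct (A : Matrix (Fin n) (Fin (n + 1)) R) : Fin (n + 1) → R :=
  fun j => (-1) ^ (j : ℕ) * (A.submatrix id j.succAbove).det

theorem det_vecCons_generalizedCrossProduct (A B : Matrix (Fin n) (Fin (n + 1)) R) :
    (of (vecCons (generalizedCrossProduct A) B)).det =
      ∑ j : Fin (n + 1), (A.submatrix id j.succAbove).det * (B.submatrix id j.succAbove).det := by
  rw [det_succ_row_zero]
  refine Finset.sum_congr rfl fun j _ => ?_
  have hsign : ((-1 : R) ^ (j : ℕ)) * (-1) ^ (j : ℕ) = 1 := by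
    rw [← mul_pow, neg_mul_neg, one_mul, one_pow]
  have hminor : (of (vecCons (generalizedCrossProduct A) B)).submatrix Fin.succ j.succAbove =
      B.submatrix id j.succAbove := by
    ext; rfl
  change (-1 : R) ^ (j : ℕ) * ((-1) ^ (j : ℕ) * _) * _ = _
  rw [hminor, ← mul_assoc, hsign, one_mul]

theorem det_mul_transpose_fin_three_four (A B : Matrix (Fin 3) (Fin 4) R) :
    (A * Bᵀ).det =
      ∑ j : Fin 4, (A.submatrix id j.succAbove).det * (B.submatrix id j.succAbove).det := by
  have h₀ : (0 : Fin 4).succAbove = ![1, 2, 3] := by decide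
  have h₁ : (1 : Fin 4).succAbove = ![0, 2, 3] := by decide
  have h₂ : (2 : Fin 4).succAbove = ![0, 1, 3] := by decide
  have h₃ : (3 : Fin 4).succAbove = ![0, 1, 2] := by decide
  simp only [Fin.sum_univ_four, h₀, h₁, h₂, h₃, det_fin_three, mul_apply, transpose_apply,
    submatrix_apply, id, cons_val_zero, cons_val_one, cons_val_two, tail_cons, head_cons]
  ring

theorem det_mul_transpose_eq_det_vecCons_generalizedCrossProduct
    (A B : Matrix (Fin 3) (Fin 4) R) :
    (A * Bᵀ).det = (of (vecCons (generalizedCrossProduct A) B)).det := by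
  rw [det_mul_transpose_fin_three_four, det_vecCons_generalizedCrossProduct]

end GeneralizedCrossProduct

theorem generalizedCrossProduct_oscillator {x₁ p₁ x₂ p₂ : ℝ}
    (hx₁ : x₁ ≠ 0) (hp₁ : p₁ ≠ 0) (hx₂ : x₂ ≠ 0) (hp₂ : p₂ ≠ 0) :
    generalizedCrossProduct !![x₁, p₁, 0, 0; 0, 0, x₂, p₂;
      (2 * p₁)⁻¹, -(2 * x₁)⁻¹, -(2 * p₂)⁻¹, (2 * x₂)⁻¹] = ![p₁, -x₁, p₂, -x₂] := by
  ext j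
  fin_cases j <;> simp [generalizedCrossProduct, det_fin_three, Fin.succAbove] <;> field_simp <;> ring

/-- Coordinates `(x₁, p₁, x₂, p₂)` are the indices `0, 1, 2, 3`, and `(α ∧ β ∧ γ)(u, w, s)` is the
determinant of the values of `α, β, γ` on `u, w, s`. -/
theorem oscillator_nambu_decomposition (x₁ p₁ x₂ p₂ : ℝ)
    (hx₁ : x₁ ≠ 0) (hp₁ : p₁ ≠ 0) (hx₂ : x₂ ≠ 0) (hp₂ : p₂ ≠ 0) :
    ∀ u w s : Fin 4 → ℝ,
      (let dI₁ : (Fin 4 → ℝ) → ℝ := fun t => x₁ * t 0 + p₁ * t 1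
       let dI₂ : (Fin 4 → ℝ) → ℝ := fun t => x₂ * t 2 + p₂ * t 3
       let J₃ : (Fin 4 → ℝ) → ℝ := fun t =>
         (1 / 2 : ℝ) * (t 0 / p₁ - t 1 / x₁ - t 2 / p₂ + t 3 / x₂)
       Matrix.det !![dI₁ u, dI₁ w, dI₁ s; dI₂ u, dI₂ w, dI₂ s; J₃ u, J₃ w, J₃ s])
      = Matrix.det (Matrix.of ![![p₁, -x₁, p₂, -x₂], u, w, s]) := by
  intro u w s
  dsimp only
  rw [← generalizedCrossProduct_oscillator hx₁ hp₁ hx₂ hp₂]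
  refine .trans ?_ (det_mul_transpose_eq_det_vecCons_generalizedCrossProduct _ (of ![u, w, s]))
  congr 1
  ext i j
  fin_cases i <;> fin_cases j <;> simp [mul_apply, Fin.sum_univ_four] <;> ring
end
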